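/- Let n > k and suppose the n×k real matrix-valued map a is given near x₀ ∈ ℝ^{n-k+1} with a(x₀) of the special form: the first column is zero and every other column has its first n-k+1 entries zero with the lower-right (k-1)×(k-1) block of full rank. If the (n-k+1)×(n-k+1) Jacobian matrix ∂(a₁¹,…,a₁^{n-k+1})/∂(x₁,…,x_{n-k+1}) at x₀ is invertible, then x₀ is an isolated point of the set {x : corank a(x) ≥ 1} (i.e., there is a neighborhood of x₀ in which a(x) has rank k for all x ≠ x₀). -/

import Mathlib

/-!
After reordering rows and columns, `a x` is the block matrix `[[f, T], [b, D]]` where `f x` consists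
of the first `n - k + 1` entries of the first column. Near `x₀` the block `D` stays invertible, and
then `a x` has full column rank exactly when the Schur complement `f - T D⁻¹ b` is nonzero. Both `T`
and `D⁻¹ b` vanish at `x₀`, so their product has zero derivative there; hence the Schur complement
has the same injective derivative as `f` at `x₀`, and so it does not vanish on a punctured
neighbourhood of `x₀`.
-/

attribute [local instance] Matrix.normedAddCommGroup Matrix.normedSpace

open Matrix Function Filter Topology Asymptotics

namespace Matrix

variable {l m n R : Type*} [Fintype m] [Fintype n]

theorem rank_eq_card_of_mulVec_injective [CommRing R] [StrongRankCondition R]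
    {A : Matrix l n R} (hA : Injective A.mulVec) : A.rank = Fintype.card n := by
  rw [rank, LinearMap.finrank_range_of_inj hA, Module.finrank_fintype_fun_eq_card]

theorem mulVec_injective_fromBlocks [CommRing R] [DecidableEq n] {A : Matrix l m R}
    {B : Matrix l n R} {C : Matrix n m R} {D : Matrix n n R} (hD : IsUnit D.det)
    (hS : Injective (A - B * D⁻¹ * C).mulVec) : Injective (fromBlocks A B C D).mulVec := by
  rw [← coe_mulVecLin, injective_iff_map_eq_zero]
  intro v hv
  rw [coe_mulVecLin, fromBlocks_mulVec, ← Sum.elim_zero_zero, Sum.elim_eq_iff] at hv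
  obtain ⟨htop, hbot⟩ := hv
  have hinr : v ∘ Sum.inr = -(D⁻¹ *ᵥ C *ᵥ (v ∘ Sum.inl)) := by
    rw [← mulVec_neg, neg_eq_of_add_eq_zero_right hbot, mulVec_mulVec, nonsing_inv_mul _ hD,
      one_mulVec]
  have hinl : v ∘ Sum.inl = 0 := by
    refine hS (?_ : _ = (A - B * D⁻¹ * C) *ᵥ 0)
    rwa [mulVec_zero, sub_mulVec, ← mulVec_mulVec, ← mulVec_mulVec, sub_eq_add_neg, ← mulVec_neg,
      ← hinr]
  rw [hinl, mulVec_zero, mulVec_zero, neg_zero] at hinr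
  ext (i | i)
  · exact congrFun hinl i
  · exact congrFun hinr i

theorem mulVec_injective_replicateCol [CommRing R] [IsDomain R] {ι : Type*} [Unique ι]
    {v : l → R} (hv : v ≠ 0) : Injective (replicateCol ι v).mulVec := by
  rw [← coe_mulVecLin, injective_iff_map_eq_zero]
  intro c hc
  have hc0 : c default • v = 0 := by
    rw [← hc]
    ext j
    simp [mulVec, dotProduct, mul_comm]
  ext i
  rw [Unique.eq_default i]
  exact (smul_eq_zero.1 hc0).resolve_right hv

theorem rank_fromBlocks_replicateCol [Field R] [DecidableEq n] {ι : Type*} [Unique ι]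
    {f : l → R} {T : Matrix l n R} {b : n → R} {D : Matrix n n R} (hD : IsUnit D.det)
    (hS : f - T *ᵥ (D⁻¹ *ᵥ b) ≠ 0) :
    (fromBlocks (replicateCol ι f) T (replicateCol ι b) D).rank = 1 + Fintype.card n := by
  have hschur : replicateCol ι f - T * D⁻¹ * replicateCol ι b =
      replicateCol ι (f - T *ᵥ (D⁻¹ *ᵥ b)) := by
    rw [Matrix.mul_assoc, ← replicateCol_mulVec, ← replicateCol_mulVec]; rfl
  have hinj := mulVec_injective_fromBlocks hD (hschur ▸ mulVec_injective_replicateCol hS)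
  rw [rank_eq_card_of_mulVec_injective hinj, Fintype.card_sum, Fintype.card_unique]

end Matrix

section Calculus

variable {𝕜 E : Type*} [NontriviallyNormedField 𝕜] [NormedAddCommGroup E] [NormedSpace 𝕜 E]

theorem DifferentiableAt.hasFDerivAt_mul_of_tendsto_zero {u v : E → 𝕜} {x : E}
    (hu : DifferentiableAt 𝕜 u x) (hu0 : u x = 0) (hv : Tendsto v (𝓝 x) (𝓝 0)) :
    HasFDerivAt (fun y => u y * v y) (0 : E →L[𝕜] 𝕜) x := by
  have hu' : u =O[𝓝 x] (· - x) := by simpa [hu0] using hu.hasFDerivAt.isBigO_sub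
  have hv' : v =o[𝓝 x] (fun _ => (1 : 𝕜)) := (isLittleO_one_iff 𝕜).2 hv
  refine .of_isLittleO ?_
  simpa [hu0, mul_comm] using hv'.smul_isBigO hu'

theorem hasFDerivAt_mulVec_of_tendsto_zero {m n : Type*} [Fintype m] [Fintype n]
    {T : E → Matrix m n 𝕜} {w : E → n → 𝕜} {x : E}
    (hT : ∀ i j, DifferentiableAt 𝕜 (fun y => T y i j) x) (hT0 : T x = 0)
    (hw : Tendsto w (𝓝 x) (𝓝 0)) :
    HasFDerivAt (fun y => T y *ᵥ w y) (0 : E →L[𝕜] m → 𝕜) x := by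
  refine hasFDerivAt_pi'' fun i => ?_
  simpa [mulVec, dotProduct] using HasFDerivAt.fun_sum fun j _ =>
    (hT i j).hasFDerivAt_mul_of_tendsto_zero (congrFun₂ hT0 i j) (tendsto_pi_nhds.1 hw j)

theorem eventually_sub_mulVec_ne_zero [CompleteSpace 𝕜] [FiniteDimensional 𝕜 E]
    {m n : Type*} [Fintype m] [Fintype n] {f : E → m → 𝕜} {T : E → Matrix m n 𝕜}
    {w : E → n → 𝕜} {x : E} (hf : DifferentiableAt 𝕜 f x) (hf' : Injective (fderiv 𝕜 f x))
    (hT : ∀ i j, DifferentiableAt 𝕜 (fun y => T y i j) x) (hT0 : T x = 0)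
    (hw : Tendsto w (𝓝 x) (𝓝 0)) :
    ∀ᶠ y in 𝓝[≠] x, f y - T y *ᵥ w y ≠ 0 := by
  obtain ⟨K, -, hK⟩ := (fderiv 𝕜 f x : E →ₗ[𝕜] m → 𝕜).injective_iff_antilipschitz.1 hf'
  have hderiv := hf.hasFDerivAt.sub (hasFDerivAt_mulVec_of_tendsto_zero hT hT0 hw)
  rw [sub_zero] at hderiv
  exact hderiv.eventually_ne ⟨K, hK⟩

theorem eventually_rank_eq_of_blocks [CompleteSpace 𝕜] [FiniteDimensional 𝕜 E]
    {l n ι : Type*} [Fintype l] [Fintype n] [DecidableEq n] [Unique ι]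
    {A : E → Matrix (l ⊕ n) (ι ⊕ n) 𝕜} {x : E}
    (hA : ∀ i j, DifferentiableAt 𝕜 (fun y => A y i j) x)
    (h₁₂ : (A x).toBlocks₁₂ = 0) (h₂₁ : (A x).toBlocks₂₁ = 0) (h₂₂ : IsUnit (A x).toBlocks₂₂.det)
    (hjac : Injective (fderiv 𝕜 (fun y j => A y (.inl j) (.inl default)) x)) :
    ∀ᶠ y in 𝓝[≠] x, (A y).rank = 1 + Fintype.card n := by
  set b : E → n → 𝕜 := fun y r => A y (.inr r) (.inl default)
  have hblocks : ∀ y, A y = fromBlocks (replicateCol ι fun j => A y (.inl j) (.inl default))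
      (A y).toBlocks₁₂ (replicateCol ι (b y)) (A y).toBlocks₂₂ := fun y => by
    ext (i | i) (j | j) <;> first | rfl | simp [b, Unique.eq_default j]
  have hD : ContinuousAt (fun y => (A y).toBlocks₂₂) x :=
    continuousAt_pi.2 fun i => continuousAt_pi.2 fun j => (hA (.inr i) (.inr j)).continuousAt
  have hdet : ∀ᶠ y in 𝓝 x, IsUnit (A y).toBlocks₂₂.det :=
    ((continuous_id.matrix_det.continuousAt.comp hD).eventually_ne h₂₂.ne_zero).mono
      fun y => isUnit_iff_ne_zero.2
  have hDinv : ContinuousAt (fun y => (A y).toBlocks₂₂⁻¹) x :=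
    (continuousAt_matrix_inv _ (NormedRing.inverse_continuousAt h₂₂.unit)).comp
      (f := fun y => (A y).toBlocks₂₂) hD
  have hb : ContinuousAt b x :=
    continuousAt_pi.2 fun r => (hA (.inr r) (.inl default)).continuousAt
  have hb0 : b x = 0 := funext fun r => congrFun₂ h₂₁ r default
  have hw : Tendsto (fun y => (A y).toBlocks₂₂⁻¹ *ᵥ b y) (𝓝 x) (𝓝 0) := by
    simpa [hb0, Function.comp_def] using
      ((continuous_fst.matrix_mulVec continuous_snd).tendsto _).comp (hDinv.prodMk_nhds hb)
  have hS := eventually_sub_mulVec_ne_zero (T := fun y => (A y).toBlocks₁₂)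
    (differentiableAt_pi.2 fun j => hA _ _) hjac (fun i j => hA _ _) h₁₂ hw
  filter_upwards [nhdsWithin_le_nhds hdet, hS] with y hy hS
  rw [hblocks y]
  exact rank_fromBlocks_replicateCol hy hS

end Calculus

/-- If `a(x₀)` has zero first column, the other columns have zero first `n-k+1` entries
with invertible lower-right `(k-1) × (k-1)` block, and the Jacobian of the first
`n-k+1` entries of the first column is invertible at `x₀`, then `x₀` is an isolated
point of `{x : corank a(x) ≥ 1}`. -/
theorem stmt_12 (n k : ℕ) (hk : 1 ≤ k) (hkn : k < n)
    (a : (Fin (n - k + 1) → ℝ) → Matrix (Fin n) (Fin k) ℝ)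
    (ha : ContDiff ℝ 1 a)
    (x₀ : Fin (n - k + 1) → ℝ)
    (hcol1 : ∀ j : Fin n, a x₀ j ⟨0, hk⟩ = 0)
    (htop : ∀ (i : Fin (k - 1)) (j : Fin (n - k + 1)),
      a x₀ ⟨j, by have := j.2; omega⟩ ⟨i + 1, by have := i.2; omega⟩ = 0)
    (hD : IsUnit (Matrix.det (fun (r i : Fin (k - 1)) =>
      a x₀ ⟨n - k + 1 + r, by have := r.2; omega⟩ ⟨i + 1, by have := i.2; omega⟩)))
    (hjac : Function.Bijective
      (fderiv ℝ (fun x => fun j : Fin (n - k + 1) =>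
        a x ⟨j, by have := j.2; omega⟩ ⟨0, hk⟩) x₀)) :
    ∃ ε > 0, ∀ x : Fin (n - k + 1) → ℝ, ‖x - x₀‖ < ε → x ≠ x₀ → (a x).rank = k := by
  let eRow : Fin (n - k + 1) ⊕ Fin (k - 1) ≃ Fin n := finSumFinEquiv.trans (finCongr (by omega))
  let eCol : Fin 1 ⊕ Fin (k - 1) ≃ Fin k := finSumFinEquiv.trans (finCongr (by omega))
  have hcol : ∀ i : Fin (k - 1), eCol (.inr i) = ⟨i + 1, by omega⟩ := fun i => by
    ext; simp [eCol, add_comm]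
  have hentry : ∀ i j, DifferentiableAt ℝ (fun x => a x i j) x₀ := fun i j =>
    (contDiff_pi.1 (contDiff_pi.1 ha i) j).differentiable one_ne_zero x₀
  have h₁₂ : ((a x₀).submatrix eRow eCol).toBlocks₁₂ = 0 := by
    ext j i
    show a x₀ (eRow (.inl j)) (eCol (.inr i)) = 0
    rw [hcol]
    exact htop i j
  have h₂₁ : ((a x₀).submatrix eRow eCol).toBlocks₂₁ = 0 := by
    ext r i
    obtain rfl := Subsingleton.elim i 0
    exact hcol1 _
  have h₂₂ : IsUnit ((a x₀).submatrix eRow eCol).toBlocks₂₂.det := by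
    have hblock : ((a x₀).submatrix eRow eCol).toBlocks₂₂ =
        fun (r i : Fin (k - 1)) => a x₀ ⟨n - k + 1 + r, by omega⟩ ⟨i + 1, by omega⟩ :=
      Matrix.ext fun r i => congrArg (a x₀ _) (hcol i)
    rwa [hblock]
  have hrank := eventually_rank_eq_of_blocks (A := fun x => (a x).submatrix eRow eCol)
    (fun i j => hentry _ _) h₁₂ h₂₁ h₂₂ hjac.injective
  obtain ⟨ε, hε, h⟩ := Metric.eventually_nhds_iff.1 (eventually_nhdsWithin_iff.1 hrank)
  refine ⟨ε, hε, fun x hx hne => ?_⟩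
  rw [← rank_submatrix (a x) eRow eCol]
  exact (h (by rwa [dist_eq_norm]) hne).trans (by rw [Fintype.card_fin]; omega)
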